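/- In any execution of the multi-writer auditable register implementation (Algorithm 1), each process applies at most one low-level write primitive to the sliding register SLR[k], for every index k ≥ 0. -/

import Mathlib

/-!
# An operational model of Algorithm 1 (multi-writer auditable register)

The algorithm implements an `n`-writer `m`-reader auditable register from an
unbounded array `SLR[-1,0,1,...]` of `(m+n)`-sliding registers, a max register
`M` storing a triple `(widx, ridx, auditset)` (ordered by its first field,
modelled here as an atomic object), and an array `H[1..m]` of single-writer
registers.  Each line of the pseudo-code is a step; readers, writers and
auditors are modelled by explicit program counters, and executions are
alternating sequences of configurations and labelled steps starting from the
initial configuration.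
-/

namespace Alg1

/-- Values stored in the auditable register. -/
abbrev Val := ℕ

/-- Entries of the sliding registers: `w`-tuples `(w, j, v, h)` posted by
    writers (with `h` a helping set of readers) and reader identifiers. -/
inductive Entry (m n : ℕ) where
  | w (j : Fin n) (v : Val) (h : Finset (Fin m))
  | r (i : Fin m)

variable {m n : ℕ}

def Entry.isW : Entry m n → Bool
  | .w _ _ _ => true
  | .r _ => false

/-- Does the window contain a `w`-tuple? -/
def hasW (win : List (Entry m n)) : Bool := win.any Entry.isW

/-- The first `w`-tuple in a window, if any. -/
def firstW : List (Entry m n) → Option (Fin n × Val × Finset (Fin m))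
  | [] => none
  | .w j v h :: _ => some (j, v, h)
  | .r _ :: rest => firstW rest

/-- `getValue`: the value of the first `w`-tuple of a window (default `0`). -/
def wval (win : List (Entry m n)) : Val := ((firstW win).map fun t => t.2.1).getD 0

/-- Reader identifiers that precede every `w`-tuple of a window. -/
def preW : List (Entry m n) → Finset (Fin m)
  | [] => ∅
  | .w _ _ _ :: _ => ∅
  | .r i :: rest => insert i (preW rest)

/-- `READERS(win)`: readers preceding every `w`-tuple, together with the
    helping set of the first `w`-tuple, if any. -/
def readersOf (win : List (Entry m n)) : Finset (Fin m) :=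
  preW win ∪ ((firstW win).map fun t => t.2.2).getD ∅

/-- Content of the max register `M`: a triple `(widx, ridx, auditset)`,
    ordered by the first field. -/
structure MVal (m : ℕ) where
  widx : ℤ
  ridx : Fin m → ℤ
  aud : Finset (Fin m × Val)

/-- Semantics of `writeMax` on `M`. -/
def wmax (old new : MVal m) : MVal m := if old.widx < new.widx then new else old

/-- The triple written to `M` after reading window `win` from `SLR[x]`:
    `(x+1, ridx[j ∈ READERS(win)] := x, auditset ∪ {(j, lv) : j ∈ READERS(win)})`. -/
def mArg (mc : MVal m) (win : List (Entry m n)) (x : ℤ) (lv : Val) : MVal m where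
  widx := x + 1
  ridx := fun j => if j ∈ readersOf win then x else mc.ridx j
  aud := mc.aud ∪ (readersOf win).image fun j => (j, lv)

/-- Write to a `k`-sliding register: append, keeping the last `k` entries. -/
def slide (k : ℕ) (l : List (Entry m n)) (e : Entry m n) : List (Entry m n) :=
  let l' := l ++ [e]
  l'.drop (l'.length - k)

/-- Program counter of a reader (one state per line of the pseudo-code). -/
inductive RPC where
  | idle
  | precheck   -- read `SLR[lsr]` (line `rd_last_wd`)
  | preM       -- read `M` (line `new_write`)
  | preHelp    -- `writeMax` on `M` (line `rd_help_M1`)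
  | loopM      -- read `M` at the head of the repeat loop (line `rd_M`)
  | helpVal    -- found help: read `SLR[lsr-1]` (`getValue`, line `rd_return_help`)
  | annH       -- write `H[i] := lsr` (line `rd_annouce_att`)
  | wSLR       -- write `i` to `SLR[lsr]` (line `rd_do_att`)
  | rSLR       -- read `SLR[lsr]` (line `rd_do_att`)
  | gVal       -- read `SLR[lsr-1]` (`getValue`, line `rd_val`)
  | helpChk    -- help the pending write to complete (line `rd_help_M2`)
  | loopEnd    -- evaluate the until condition (line `rd_att_success`)
  | retNow     -- return `lval`

structure RState (m n : ℕ) where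
  lsr : ℤ
  lval : Val
  mc : MVal m
  win : List (Entry m n)
  it : ℕ          -- number of iterations of the repeat loop of the current READ
  pc : RPC

/-- Program counter of a writer. -/
inductive WPC where
  | idle
  | readM    -- read `M` (line `w_read_M`)
  | scanH    -- read `H[k]` (line `w_att`)
  | scanS    -- read `SLR[a_k]` (line `w_help_wd`)
  | post     -- write the `w`-tuple to `SLR[widx]` (line `w_write_SLR`)
  | postR    -- read `SLR[widx]`
  | postV    -- read `SLR[widx-1]` (`getValue`)
  | postM    -- `writeMax` on `M` (line `w_write_M`)
  | wret     -- return

structure WState (m n : ℕ) where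
  v : Val
  mc : MVal m
  toHelp : Finset (Fin m)
  k : ℕ
  a : ℤ
  win : List (Entry m n)
  val : Val
  pc : WPC

/-- Program counter of an auditor. -/
inductive APC where
  | idle
  | aM       -- read `M` (line `adt_read_M`)
  | aR       -- read `SLR[widx]` (line `adt_val`)
  | aV       -- read `SLR[widx-1]` (`getValue`, line `adt_val`)
  | aret     -- return the audit set

structure AState (m n : ℕ) where
  mc : MVal m
  win : List (Entry m n)
  val : Val
  pc : APC

/-- Processes: `m` readers, `n` writers, and arbitrarily many auditors. -/
inductive Proc (m n : ℕ) where
  | rdr (i : Fin m)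
  | wtr (j : Fin n)
  | adt (a : ℕ)
  deriving DecidableEq

/-- A configuration: shared memory plus the local state of every process. -/
structure Config (m n : ℕ) where
  slr : ℤ → List (Entry m n)
  M : MVal m
  H : Fin m → ℤ
  rst : Fin m → RState m n
  wst : Fin n → WState m n
  ast : ℕ → AState m n

/-- Step labels: invocations and responses of high-level operations, and
    primitive operations applied to the base objects. -/
inductive Lbl (m n : ℕ) where
  | invRead (i : Fin m)
  | respRead (i : Fin m) (v : Val)
  | invWrite (j : Fin n) (v : Val)
  | respWrite (j : Fin n)
  | invAudit (a : ℕ)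
  | respAudit (a : ℕ) (A : Finset (Fin m × Val))
  | slrRead (p : Proc m n) (x : ℤ) (win : List (Entry m n))
  | slrWrite (p : Proc m n) (x : ℤ) (e : Entry m n)
  | mRead (p : Proc m n) (v : MVal m)
  | mWrite (p : Proc m n) (v : MVal m)
  | hRead (j : Fin n) (k : Fin m) (a : ℤ)
  | hWrite (i : Fin m) (x : ℤ)
  | tau (p : Proc m n)

def upR (c : Config m n) (i : Fin m) (s : RState m n) : Config m n :=
  { c with rst := Function.update c.rst i s }

def upW (c : Config m n) (j : Fin n) (s : WState m n) : Config m n :=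
  { c with wst := Function.update c.wst j s }

def upA (c : Config m n) (a : ℕ) (s : AState m n) : Config m n :=
  { c with ast := Function.update c.ast a s }

/-- The transition relation of Algorithm 1. -/
def Step (c : Config m n) (l : Lbl m n) (c' : Config m n) : Prop :=
  match l with
  | .invRead i =>
      let s := c.rst i
      s.pc = .idle ∧
      c' = upR c i { s with it := 0, pc := if 0 ≤ s.lsr then RPC.precheck else RPC.loopM }
  | .respRead i v =>
      let s := c.rst i
      s.pc = .retNow ∧ v = s.lval ∧ c' = upR c i { s with pc := .idle }
  | .invWrite j v =>
      let s := c.wst j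
      s.pc = .idle ∧ c' = upW c j { s with v := v, pc := .readM }
  | .respWrite j =>
      let s := c.wst j
      s.pc = .wret ∧ c' = upW c j { s with pc := .idle }
  | .invAudit a =>
      let s := c.ast a
      s.pc = .idle ∧ c' = upA c a { s with pc := .aM }
  | .respAudit a A =>
      let s := c.ast a
      s.pc = .aret ∧
      A = s.mc.aud ∪ (readersOf s.win).image (fun j => (j, s.val)) ∧
      c' = upA c a { s with pc := .idle }
  | .slrRead p x win =>
      win = c.slr x ∧
      (match p with
       | .rdr i =>
          let s := c.rst i
          (s.pc = .precheck ∧ x = s.lsr ∧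
             c' = upR c i { s with win := win, pc := if hasW win then RPC.preM else RPC.retNow }) ∨
          (s.pc = .helpVal ∧ x = s.lsr - 1 ∧
             c' = upR c i { s with lval := wval win, pc := .retNow }) ∨
          (s.pc = .rSLR ∧ x = s.lsr ∧
             c' = upR c i { s with win := win, pc := .gVal }) ∨
          (s.pc = .gVal ∧ x = s.lsr - 1 ∧
             c' = upR c i { s with lval := wval win, pc := .helpChk })
       | .wtr j =>
          let s := c.wst j
          (s.pc = .scanS ∧ x = s.a ∧
             (∃ hk : s.k < m,
               c' = upW c j { s with toHelp := if (⟨s.k, hk⟩ : Fin m) ∈ readersOf win then s.toHelp else insert (⟨s.k, hk⟩ : Fin m) s.toHelp, k := s.k + 1, pc := .scanH })) ∨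
          (s.pc = .postR ∧ x = s.mc.widx ∧
             c' = upW c j { s with win := win, pc := .postV }) ∨
          (s.pc = .postV ∧ x = s.mc.widx - 1 ∧
             c' = upW c j { s with val := wval win, pc := .postM })
       | .adt a =>
          let s := c.ast a
          (s.pc = .aR ∧ x = s.mc.widx ∧
             c' = upA c a { s with win := win, pc := .aV }) ∨
          (s.pc = .aV ∧ x = s.mc.widx - 1 ∧
             c' = upA c a { s with val := wval win, pc := .aret }))
  | .slrWrite p x e =>
      (match p with
       | .rdr i =>
          let s := c.rst i
          s.pc = .wSLR ∧ x = s.lsr ∧ e = .r i ∧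
          c' = { upR c i { s with pc := .rSLR } with
                 slr := Function.update c.slr x (slide (m + n) (c.slr x) e) }
       | .wtr j =>
          let s := c.wst j
          s.pc = .post ∧ x = s.mc.widx ∧ e = .w j s.v s.toHelp ∧
          c' = { upW c j { s with pc := .postR } with
                 slr := Function.update c.slr x (slide (m + n) (c.slr x) e) }
       | .adt _ => False)
  | .mRead p v =>
      v = c.M ∧
      (match p with
       | .rdr i =>
          let s := c.rst i
          (s.pc = .preM ∧
             c' = upR c i { s with mc := v, pc := if v.widx = s.lsr then RPC.preHelp else RPC.loopM }) ∨
          (s.pc = .loopM ∧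
             c' = upR c i (if s.lsr < v.ridx i then
                { s with mc := v, it := s.it + 1, lsr := v.ridx i, pc := .helpVal }
              else
                { s with mc := v, it := s.it + 1, lsr := v.widx, pc := .annH }))
       | .wtr j =>
          let s := c.wst j
          s.pc = .readM ∧
          c' = upW c j { s with mc := v, toHelp := ∅, k := 0, pc := .scanH }
       | .adt a =>
          let s := c.ast a
          s.pc = .aM ∧ c' = upA c a { s with mc := v, pc := .aR })
  | .mWrite p v =>
      (match p with
       | .rdr i =>
          let s := c.rst i
          (s.pc = .preHelp ∧ v = mArg s.mc s.win s.lsr s.lval ∧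
             c' = { upR c i { s with pc := .loopM } with M := wmax c.M v }) ∨
          (s.pc = .helpChk ∧ hasW s.win = true ∧ v = mArg s.mc s.win s.lsr s.lval ∧
             c' = { upR c i { s with pc := .loopEnd } with M := wmax c.M v })
       | .wtr j =>
          let s := c.wst j
          s.pc = .postM ∧ v = mArg s.mc s.win s.mc.widx s.val ∧
          c' = { upW c j { s with pc := .wret } with M := wmax c.M v }
       | .adt _ => False)
  | .hRead j k a =>
      let s := c.wst j
      s.pc = .scanH ∧ (k : ℕ) = s.k ∧ a = c.H k ∧
      c' = upW c j (if s.mc.ridx k < a then { s with a := a, pc := .scanS }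
                    else { s with k := s.k + 1 })
  | .hWrite i x =>
      let s := c.rst i
      s.pc = .annH ∧ x = s.lsr ∧
      c' = { upR c i { s with pc := .wSLR } with H := Function.update c.H i x }
  | .tau p =>
      match p with
      | .rdr i =>
          let s := c.rst i
          (s.pc = .helpChk ∧ hasW s.win = false ∧
             c' = upR c i { s with pc := .loopEnd }) ∨
          (s.pc = .loopEnd ∧
             c' = upR c i { s with pc := if i ∈ readersOf s.win then RPC.retNow else RPC.loopM })
      | .wtr j =>
          let s := c.wst j
          s.pc = .scanH ∧ s.k = m ∧ c' = upW c j { s with pc := .post }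
      | .adt _ => False

/-- The initial configuration: `SLR[-1]` holds `(w, j₀, v₀, ∅)`, all other
    sliding registers are empty, `M = (0, [-1,…,-1], ∅)`, `H = [-1,…,-1]`,
    and every process is idle (readers start with `lsr = -1`). -/
def init (m n : ℕ) (v0 : Val) (j0 : Fin n) : Config m n where
  slr := fun x => if x = -1 then [.w j0 v0 ∅] else []
  M := ⟨0, fun _ => -1, ∅⟩
  H := fun _ => -1
  rst := fun _ => ⟨-1, v0, ⟨0, fun _ => -1, ∅⟩, [], 0, .idle⟩
  wst := fun _ => ⟨v0, ⟨0, fun _ => -1, ∅⟩, ∅, 0, -1, [], v0, .idle⟩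
  ast := fun _ => ⟨⟨0, fun _ => -1, ∅⟩, [], v0, .idle⟩

/-- A finite execution of Algorithm 1: configurations `cfg 0, …, cfg len`
    connected by labelled steps. -/
structure Exec (m n : ℕ) (v0 : Val) (j0 : Fin n) where
  len : ℕ
  cfg : ℕ → Config m n
  lbl : ℕ → Lbl m n
  h0 : cfg 0 = init m n v0 j0
  hstep : ∀ t, t < len → Step (cfg t) (lbl t) (cfg (t + 1))

variable {v0 : Val} {j0 : Fin n}

/-! ### Derived notions -/

/-- The process performing a step. -/
def procOf : Lbl m n → Proc m n
  | .invRead i => .rdr i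
  | .respRead i _ => .rdr i
  | .invWrite j _ => .wtr j
  | .respWrite j => .wtr j
  | .invAudit a => .adt a
  | .respAudit a _ => .adt a
  | .slrRead p _ _ => p
  | .slrWrite p _ _ => p
  | .mRead p _ => p
  | .mWrite p _ => p
  | .hRead j _ _ => .wtr j
  | .hWrite i _ => .rdr i
  | .tau p => p

/-- The label writes a `w`-tuple to `SLR[x]`. -/
def isWWrite (l : Lbl m n) (x : ℤ) : Prop :=
  ∃ p j v h, l = .slrWrite p x (.w j v h)

/-- Step `t` is the first write of a `w`-tuple to `SLR[x]` in the execution. -/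
def FirstWWriteAt (E : Exec m n v0 j0) (x : ℤ) (t : ℕ) : Prop :=
  t < E.len ∧ isWWrite (E.lbl t) x ∧ ∀ t', t' < t → ¬ isWWrite (E.lbl t') x

/-- Step `t` changes `M.widx` from `ℓ - 1` to `ℓ`. -/
def WidxChangeAt (E : Exec m n v0 j0) (ℓ : ℤ) (t : ℕ) : Prop :=
  t < E.len ∧ (∃ p v, E.lbl t = .mWrite p v) ∧
  (E.cfg t).M.widx = ℓ - 1 ∧ (E.cfg (t + 1)).M.widx = ℓ

/-- `x` is the largest index of a sliding register containing a `w`-tuple. -/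
def WIDXis (c : Config m n) (x : ℤ) : Prop :=
  hasW (c.slr x) = true ∧ ∀ y : ℤ, x < y → hasW (c.slr y) = false

/-- Configuration in region `D_ℓ`: `M.widx = ℓ = WIDX + 1`. -/
def inD (c : Config m n) (ℓ : ℤ) : Prop := c.M.widx = ℓ ∧ WIDXis c (ℓ - 1)

/-- Configuration in region `E_ℓ`: `M.widx = ℓ = WIDX`. -/
def inE (c : Config m n) (ℓ : ℤ) : Prop := c.M.widx = ℓ ∧ WIDXis c ℓ

/-! ### Classification of operations, and linearizations -/

/-- Classification of the operations of Algorithm 1. -/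
inductive Kind where
  | silentR | directR | helpedR | visibleW | hiddenW | defA | nondefA
  deriving DecidableEq

/-- Rank used by the linearization rules `R1`–`R4` within a block of
    operations with the same index. -/
def rank : Kind → ℕ
  | .silentR => 0
  | .directR => 0
  | .nondefA => 0
  | .helpedR => 1
  | .defA => 2
  | .hiddenW => 3
  | .visibleW => 4

def Kind.isRead : Kind → Prop
  | .silentR => True | .directR => True | .helpedR => True
  | _ => False

def Kind.isWrite : Kind → Prop
  | .visibleW => True | .hiddenW => True
  | _ => False

def Kind.isAudit : Kind → Prop
  | .defA => True | .nondefA => True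
  | _ => False

/-- The data of a classified operation: its process, invocation step, optional
    response step, kind, associated sliding-register index `idx`, its
    characteristic step `key` on `SLR[idx]` (used by the linearization rules),
    its value (return value of a READ / input of a WRITE) and, for an AUDIT,
    the returned audit set. -/
structure OpData (m n : ℕ) where
  proc : Proc m n
  inv : ℕ
  resp : Option ℕ
  kind : Kind
  idx : ℤ
  key : ℕ
  val : Val
  aset : Finset (Fin m × Val)

/-- The label is a response event of process `p`. -/
def isRespOf (l : Lbl m n) (p : Proc m n) : Prop :=
  (∃ i v, p = .rdr i ∧ l = .respRead i v) ∨
  (∃ j, p = .wtr j ∧ l = .respWrite j) ∨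
  (∃ a A, p = .adt a ∧ l = .respAudit a A)

/-- `resp` is the matching response of the operation of `p` invoked at `a`
    (or the operation is pending if `resp = none`). -/
def RespMatch (E : Exec m n v0 j0) (p : Proc m n) (a : ℕ) : Option ℕ → Prop
  | some b => a < b ∧ b < E.len ∧ isRespOf (E.lbl b) p ∧
      ∀ t, a < t → t < b → ¬ isRespOf (E.lbl t) p
  | none => ∀ t, a < t → t < E.len → ¬ isRespOf (E.lbl t) p

/-- `x` is the smallest index `> x0` of a sliding register in which reader `i`
    is recorded (evaluated in the final configuration). -/
def minRecIdx (E : Exec m n v0 j0) (i : Fin m) (x0 x : ℤ) : Prop :=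
  x0 < x ∧ i ∈ readersOf ((E.cfg E.len).slr x) ∧
    ∀ y : ℤ, x0 < y → y < x → i ∉ readersOf ((E.cfg E.len).slr y)

/-- The return value of a classified READ: the actual response if the READ is
    complete; for a pending classified READ (completed in `H'`), the value of
    the first `w`-tuple of `SLR[idx-1]`. -/
def ReadValOK (E : Exec m n v0 j0) (o : OpData m n) (i : Fin m) : Prop :=
  match o.resp with
  | some b => E.lbl b = .respRead i o.val
  | none => o.val = wval ((E.cfg E.len).slr (o.idx - 1))

/-- `o` describes a classified operation of the execution `E`. -/
def IsOp (E : Exec m n v0 j0) (o : OpData m n) : Prop :=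
  o.inv < E.len ∧ RespMatch E o.proc o.inv o.resp ∧
  match o.kind with
  | .silentR =>
      ∃ i b win, o.proc = .rdr i ∧ o.resp = some b ∧
        E.lbl o.inv = .invRead i ∧
        (∃ t', t' < o.inv ∧ E.lbl t' = .invRead i) ∧
        o.idx = ((E.cfg o.inv).rst i).lsr ∧
        o.inv < o.key ∧ o.key < b ∧
        E.lbl o.key = .slrRead (.rdr i) o.idx win ∧
        ((E.cfg o.key).rst i).pc = .precheck ∧
        hasW win = false ∧
        E.lbl b = .respRead i o.val ∧
        o.aset = ∅
  | .directR =>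
      ∃ i, o.proc = .rdr i ∧ E.lbl o.inv = .invRead i ∧
        minRecIdx E i ((E.cfg o.inv).rst i).lsr o.idx ∧
        i ∈ preW ((E.cfg E.len).slr o.idx) ∧
        o.inv < o.key ∧ o.key < E.len ∧
        E.lbl o.key = .slrWrite (.rdr i) o.idx (.r i) ∧
        (∀ b, o.resp = some b → o.key < b) ∧
        ReadValOK E o i ∧ o.aset = ∅
  | .helpedR =>
      ∃ i, o.proc = .rdr i ∧ E.lbl o.inv = .invRead i ∧
        minRecIdx E i ((E.cfg o.inv).rst i).lsr o.idx ∧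
        i ∉ preW ((E.cfg E.len).slr o.idx) ∧
        o.key = o.inv ∧ ReadValOK E o i ∧ o.aset = ∅
  | .visibleW =>
      ∃ j h, o.proc = .wtr j ∧ E.lbl o.inv = .invWrite j o.val ∧
        o.inv < o.key ∧ o.key < E.len ∧
        E.lbl o.key = .slrWrite (.wtr j) o.idx (.w j o.val h) ∧
        (∀ b, o.resp = some b → o.key < b) ∧
        firstW ((E.cfg E.len).slr o.idx) = some (j, o.val, h) ∧
        o.aset = ∅
  | .hiddenW =>
      ∃ j h, o.proc = .wtr j ∧ E.lbl o.inv = .invWrite j o.val ∧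
        o.inv < o.key ∧ o.key < E.len ∧
        E.lbl o.key = .slrWrite (.wtr j) o.idx (.w j o.val h) ∧
        (∀ b, o.resp = some b → o.key < b) ∧
        firstW ((E.cfg E.len).slr o.idx) ≠ some (j, o.val, h) ∧
        o.aset = ∅
  | .defA =>
      ∃ a b tM mv win, o.proc = .adt a ∧ o.resp = some b ∧
        E.lbl o.inv = .invAudit a ∧
        o.inv < tM ∧ tM < o.key ∧ o.key < b ∧
        E.lbl tM = .mRead (.adt a) mv ∧ ((E.cfg tM).ast a).pc = .aM ∧
        o.idx = mv.widx ∧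
        E.lbl o.key = .slrRead (.adt a) o.idx win ∧
        ((E.cfg o.key).ast a).pc = .aR ∧
        hasW win = true ∧
        E.lbl b = .respAudit a o.aset ∧ o.val = 0
  | .nondefA =>
      ∃ a b tM mv win, o.proc = .adt a ∧ o.resp = some b ∧
        E.lbl o.inv = .invAudit a ∧
        o.inv < tM ∧ tM < o.key ∧ o.key < b ∧
        E.lbl tM = .mRead (.adt a) mv ∧ ((E.cfg tM).ast a).pc = .aM ∧
        o.idx = mv.widx ∧
        E.lbl o.key = .slrRead (.adt a) o.idx win ∧
        ((E.cfg o.key).ast a).pc = .aR ∧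
        hasW win = false ∧
        E.lbl b = .respAudit a o.aset ∧ o.val = 0

/-- `o` terminates (its response event occurs) before `o'` starts. -/
def EndsBefore (o o' : OpData m n) : Prop :=
  ∃ b, o.resp = some b ∧ b < o'.inv

/-- `lt` is a linearization of the classified operations of `E` obeying the
    rules `R0`–`R4`: a strict total order on classified operations, ordering
    operations by increasing `idx` (`R0`); within the same `idx`, first
    silent READs, direct READs and non-definitive AUDITs ordered by their
    characteristic step on `SLR[idx]` (`R1`), then helped READs in arbitrary
    order followed by the definitive AUDITs ordered by their read of
    `SLR[idx]` (`R2`), then the hidden WRITEs ordered by their write to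
    `SLR[idx]` (`R3`), and the visible WRITE last (`R4`). -/
def LinOK (E : Exec m n v0 j0) (lt : OpData m n → OpData m n → Prop) : Prop :=
  (∀ o, IsOp E o → ¬ lt o o) ∧
  (∀ o₁ o₂ o₃, IsOp E o₁ → IsOp E o₂ → IsOp E o₃ →
      lt o₁ o₂ → lt o₂ o₃ → lt o₁ o₃) ∧
  (∀ o₁ o₂, IsOp E o₁ → IsOp E o₂ → o₁ ≠ o₂ → lt o₁ o₂ ∨ lt o₂ o₁) ∧
  (∀ o₁ o₂, IsOp E o₁ → IsOp E o₂ → o₁.idx < o₂.idx → lt o₁ o₂) ∧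
  (∀ o₁ o₂, IsOp E o₁ → IsOp E o₂ → o₁.idx = o₂.idx →
      rank o₁.kind < rank o₂.kind → lt o₁ o₂) ∧
  (∀ o₁ o₂, IsOp E o₁ → IsOp E o₂ → o₁.idx = o₂.idx →
      rank o₁.kind = rank o₂.kind → o₁.kind ≠ .helpedR →
      o₁.key < o₂.key → lt o₁ o₂)


section WriteOnce

variable {m n : ℕ} {v0 : Val} {j0 : Fin n}

lemma wmax_widx_le_left (o v : MVal m) : o.widx ≤ (wmax o v).widx := by
  unfold wmax; split <;> omega

lemma wmax_widx_le_right (o v : MVal m) : v.widx ≤ (wmax o v).widx := by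
  unfold wmax; split <;> omega

lemma wmax_eq_or (o v : MVal m) : wmax o v = o ∨ wmax o v = v := by
  unfold wmax; split
  · exact Or.inr rfl
  · exact Or.inl rfl

lemma mem_preW_of_noW {l : List (Entry m n)} {i : Fin m}
    (hw : hasW l = false) (hm : Entry.r i ∈ l) : i ∈ preW l := by
  induction l with
  | nil => simp at hm
  | cons e rest ih =>
    cases e with
    | w j v h => simp [hasW, Entry.isW] at hw
    | r i' =>
      have hw' : hasW rest = false := by simpa [hasW, Entry.isW] using hw
      rcases List.mem_cons.mp hm with h | h
      · obtain rfl : i' = i := by cases h; rfl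
        simp [preW]
      · simp [preW, ih hw' h]

lemma slide_eq_append {K : ℕ} {l : List (Entry m n)} (h : l.length < K) (e : Entry m n) :
    slide K l e = l ++ [e] := by
  unfold slide
  simp only [List.length_append, List.length_singleton]
  rw [Nat.sub_eq_zero_of_le (by omega), List.drop_zero]

lemma self_mem_slide {K : ℕ} (hK : 0 < K) (l : List (Entry m n)) (e : Entry m n) :
    e ∈ slide K l e := by
  unfold slide
  simp only [List.length_append, List.length_singleton]
  rw [List.drop_append_of_le_length (by omega)]
  simp

lemma slide_length_le {K : ℕ} (l : List (Entry m n)) (e : Entry m n) :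
    (slide K l e).length ≤ l.length + 1 := by
  simp [slide]

/-- Real (non-auditor) processes: the only processes that write to `SLR`. -/
def IsReal : Proc m n → Prop
  | .adt _ => False
  | _ => True

lemma isReal_mem_S {q : Proc m n} (h : IsReal q) :
    q ∈ ((Finset.univ.image Proc.rdr ∪ Finset.univ.image Proc.wtr) : Finset (Proc m n)) := by
  cases q with
  | rdr i => exact Finset.mem_union_left _ (Finset.mem_image_of_mem _ (Finset.mem_univ i))
  | wtr j => exact Finset.mem_union_right _ (Finset.mem_image_of_mem _ (Finset.mem_univ j))
  | adt a => exact absurd h (by simp [IsReal])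

lemma real_nodup_length_le (l : List (Proc m n)) (hn : l.Nodup)
    (hr : ∀ q ∈ l, IsReal q) : l.length ≤ m + n := by
  classical
  have h1 : l.toFinset ⊆ _ := fun q hq => isReal_mem_S (hr q (List.mem_toFinset.mp hq))
  have h2 := Finset.card_le_card h1
  have h3 : l.toFinset.card = l.length := List.toFinset_card_of_nodup hn
  have h4 := Finset.card_union_le (Finset.univ.image (Proc.rdr : Fin m → Proc m n))
      (Finset.univ.image (Proc.wtr : Fin n → Proc m n))
  have h5 := Finset.card_image_le (s := (Finset.univ : Finset (Fin m)))
      (f := (Proc.rdr : Fin m → Proc m n))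
  have h6 := Finset.card_image_le (s := (Finset.univ : Finset (Fin n)))
      (f := (Proc.wtr : Fin n → Proc m n))
  simp only [Finset.card_univ, Fintype.card_fin] at h5 h6
  omega

/-- `stepw k l = some p` iff label `l` is a write by `p` to `SLR[k]`. -/
def stepw (k : ℤ) : Lbl m n → Option (Proc m n)
  | .slrWrite p x _ => if x = k then some p else none
  | _ => none

/-- The processes that have written to `SLR[k]` during the first `t` steps. -/
def procs (E : Exec m n v0 j0) (k : ℤ) (t : ℕ) : List (Proc m n) :=
  (List.range t).filterMap fun s => stepw k (E.lbl s)

lemma procs_succ (E : Exec m n v0 j0) (k : ℤ) (t : ℕ) :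
    procs E k (t + 1) = procs E k t ++ (stepw k (E.lbl t)).toList := by
  rw [procs, List.range_succ, List.filterMap_append, ← procs]
  cases h : stepw k (E.lbl t) <;> simp [List.filterMap_cons, h]

def G4set : RPC → Prop
  | .preHelp | .annH | .wSLR | .rSLR | .gVal | .helpChk | .loopEnd => True
  | _ => False

/-- Invariant of the max register. -/
def MInv (c : Config m n) : Prop := 0 ≤ c.M.widx ∧ ∀ i, c.M.ridx i ≤ c.M.widx

/-- Local invariant of reader `i`. -/
def RLoc (c : Config m n) (i : Fin m) : Prop :=
  (c.rst i).lsr ≤ c.M.widx ∧ 0 ≤ (c.rst i).mc.widx ∧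
  (∀ j, (c.rst i).mc.ridx j ≤ (c.rst i).mc.widx) ∧
  (G4set (c.rst i).pc → (c.rst i).mc.widx = (c.rst i).lsr)

/-- Local invariant of writer `j`. -/
def WLoc (c : Config m n) (j : Fin n) : Prop :=
  0 ≤ (c.wst j).mc.widx ∧ (∀ i, (c.wst j).mc.ridx i ≤ (c.wst j).mc.widx) ∧
  ((c.wst j).pc = .wret → (c.wst j).mc.widx < c.M.widx)

/-- Invariant of reader `i` relative to an index `k ≥ 0` it has already written to. -/
def RW (c : Config m n) (i : Fin m) (k : ℤ) : Prop :=
  match (c.rst i).pc with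
  | .loopM => k < c.M.widx
  | .annH | .wSLR => k < (c.rst i).lsr
  | .rSLR => k < (c.rst i).lsr ∨ (k = (c.rst i).lsr ∧ Entry.r i ∈ c.slr k)
  | .gVal | .helpChk => k < (c.rst i).lsr ∨ k < c.M.widx ∨
      (k = (c.rst i).lsr ∧ Entry.r i ∈ (c.rst i).win)
  | .loopEnd => k < (c.rst i).lsr ∨ k < c.M.widx ∨
      (k = (c.rst i).lsr ∧ Entry.r i ∈ (c.rst i).win ∧ hasW (c.rst i).win = false)
  | _ => k ≤ (c.rst i).lsr ∨ k < c.M.widx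

/-- Invariant of writer `j` relative to an index `k ≥ 0` it has already written to. -/
def WW (c : Config m n) (j : Fin n) (k : ℤ) : Prop :=
  match (c.wst j).pc with
  | .idle | .readM => k < c.M.widx
  | .scanH | .scanS | .post => k < (c.wst j).mc.widx
  | _ => k ≤ (c.wst j).mc.widx

/-- The global inductive invariant. -/
def Inv (E : Exec m n v0 j0) (t : ℕ) : Prop :=
  MInv (E.cfg t) ∧ (∀ i, RLoc (E.cfg t) i) ∧ (∀ j, WLoc (E.cfg t) j) ∧
  (∀ k : ℤ, 0 ≤ k → (procs E k t).Nodup ∧ (∀ q ∈ procs E k t, IsReal q) ∧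
      ((E.cfg t).slr k).length ≤ (procs E k t).length) ∧
  (∀ i (k : ℤ), 0 ≤ k → Proc.rdr i ∈ procs E k t → RW (E.cfg t) i k) ∧
  (∀ j (k : ℤ), 0 ≤ k → Proc.wtr j ∈ procs E k t → WW (E.cfg t) j k)


lemma M_mono {c c' : Config m n} {l : Lbl m n} (hs : Step c l c') :
    c.M.widx ≤ c'.M.widx := by
  cases l <;> simp only [Step] at hs
  case invRead i => obtain ⟨-, rfl⟩ := hs; exact le_rfl
  case respRead i v => obtain ⟨-, -, rfl⟩ := hs; exact le_rfl
  case invWrite j v => obtain ⟨-, rfl⟩ := hs; exact le_rfl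
  case respWrite j => obtain ⟨-, rfl⟩ := hs; exact le_rfl
  case invAudit a => obtain ⟨-, rfl⟩ := hs; exact le_rfl
  case respAudit a A => obtain ⟨-, -, rfl⟩ := hs; exact le_rfl
  case slrRead p x win =>
    obtain ⟨-, h⟩ := hs
    cases p with
    | rdr i => rcases h with ⟨-,-,rfl⟩|⟨-,-,rfl⟩|⟨-,-,rfl⟩|⟨-,-,rfl⟩ <;> exact le_rfl
    | wtr j => rcases h with ⟨-,-,hk,rfl⟩|⟨-,-,rfl⟩|⟨-,-,rfl⟩ <;> exact le_rfl
    | adt a => rcases h with ⟨-,-,rfl⟩|⟨-,-,rfl⟩ <;> exact le_rfl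
  case slrWrite p x e =>
    cases p with
    | rdr i => obtain ⟨-,-,-,rfl⟩ := hs; exact le_rfl
    | wtr j => obtain ⟨-,-,-,rfl⟩ := hs; exact le_rfl
    | adt a => exact hs.elim
  case mRead p v =>
    obtain ⟨-, h⟩ := hs
    cases p with
    | rdr i => rcases h with ⟨-,rfl⟩|⟨-,rfl⟩ <;> exact le_rfl
    | wtr j => obtain ⟨-,rfl⟩ := h; exact le_rfl
    | adt a => obtain ⟨-,rfl⟩ := h; exact le_rfl
  case mWrite p v =>
    cases p with
    | rdr i => rcases hs with ⟨-,-,rfl⟩|⟨-,-,-,rfl⟩ <;> exact wmax_widx_le_left _ _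
    | wtr j => obtain ⟨-,-,rfl⟩ := hs; exact wmax_widx_le_left _ _
    | adt a => exact hs.elim
  case hRead j km a => obtain ⟨-,-,-,rfl⟩ := hs; exact le_rfl
  case hWrite i x => obtain ⟨-,-,rfl⟩ := hs; exact le_rfl
  case tau p =>
    cases p with
    | rdr i => rcases hs with ⟨-,-,rfl⟩|⟨-,rfl⟩ <;> exact le_rfl
    | wtr j => obtain ⟨-,-,rfl⟩ := hs; exact le_rfl
    | adt a => exact hs.elim

lemma RW_frame {c c' : Config m n} {i : Fin m} {k : ℤ}
    (hr : c'.rst i = c.rst i) (hMm : c.M.widx ≤ c'.M.widx)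
    (hnd : ∀ e ∈ c.slr k, e ∈ c'.slr k) (h : RW c i k) : RW c' i k := by
  unfold RW at h ⊢
  rw [hr]
  cases hpc : (c.rst i).pc <;> rw [hpc] at h <;> dsimp only at h ⊢
  case loopM => omega
  case annH => exact h
  case wSLR => exact h
  case rSLR =>
    rcases h with h | ⟨h1, h2⟩
    exacts [Or.inl h, Or.inr ⟨h1, hnd _ h2⟩]
  case gVal =>
    rcases h with h | h | h
    exacts [Or.inl h, Or.inr (Or.inl (by omega)), Or.inr (Or.inr h)]
  case helpChk =>
    rcases h with h | h | h
    exacts [Or.inl h, Or.inr (Or.inl (by omega)), Or.inr (Or.inr h)]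
  case loopEnd =>
    rcases h with h | h | h
    exacts [Or.inl h, Or.inr (Or.inl (by omega)), Or.inr (Or.inr h)]
  all_goals
    rcases h with h | h
    exacts [Or.inl h, Or.inr (by omega)]

lemma WW_frame {c c' : Config m n} {j : Fin n} {k : ℤ}
    (hr : c'.wst j = c.wst j) (hMm : c.M.widx ≤ c'.M.widx)
    (h : WW c j k) : WW c' j k := by
  unfold WW at h ⊢
  rw [hr]
  cases hpc : (c.wst j).pc <;> rw [hpc] at h <;> dsimp only at h ⊢ <;> omega

lemma RLoc_frame {c c' : Config m n} {i : Fin m}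
    (hr : c'.rst i = c.rst i) (hMm : c.M.widx ≤ c'.M.widx)
    (h : RLoc c i) : RLoc c' i := by
  unfold RLoc at h ⊢
  rw [hr]
  exact ⟨le_trans h.1 hMm, h.2.1, h.2.2.1, h.2.2.2⟩

lemma WLoc_frame {c c' : Config m n} {j : Fin n}
    (hr : c'.wst j = c.wst j) (hMm : c.M.widx ≤ c'.M.widx)
    (h : WLoc c j) : WLoc c' j := by
  unfold WLoc at h ⊢
  rw [hr]
  exact ⟨h.1, h.2.1, fun hpc => lt_of_lt_of_le (h.2.2 hpc) hMm⟩


def MOk (v : MVal m) : Prop := 0 ≤ v.widx ∧ ∀ i, v.ridx i ≤ v.widx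

lemma MOk_wmax {o v : MVal m} (h1 : MOk o) (h2 : MOk v) : MOk (wmax o v) := by
  rcases wmax_eq_or o v with h | h <;> rw [h] <;> assumption

lemma MOk_mArg (mc : MVal m) (win : List (Entry m n)) (x : ℤ) (lv : Val)
    (hx : 0 ≤ x) (hr : ∀ i, mc.ridx i ≤ x) : MOk (mArg mc win x lv) := by
  constructor
  · dsimp [mArg]; omega
  · intro i; have := hr i; dsimp [mArg]; split <;> omega

lemma MInv_eq_MOk (c : Config m n) : MInv c ↔ MOk c.M := Iff.rfl

lemma MInv_step {c c' : Config m n} {l : Lbl m n} (hs : Step c l c')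
    (hM : MInv c) (hR : ∀ i, RLoc c i) (hW : ∀ j, WLoc c j) : MInv c' := by
  cases l <;> simp only [Step] at hs
  case invRead i => obtain ⟨-, rfl⟩ := hs; exact hM
  case respRead i v => obtain ⟨-, -, rfl⟩ := hs; exact hM
  case invWrite j v => obtain ⟨-, rfl⟩ := hs; exact hM
  case respWrite j => obtain ⟨-, rfl⟩ := hs; exact hM
  case invAudit a => obtain ⟨-, rfl⟩ := hs; exact hM
  case respAudit a A => obtain ⟨-, -, rfl⟩ := hs; exact hM
  case slrRead p x win =>
    obtain ⟨-, h⟩ := hs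
    cases p with
    | rdr i => rcases h with ⟨-,-,rfl⟩|⟨-,-,rfl⟩|⟨-,-,rfl⟩|⟨-,-,rfl⟩ <;> exact hM
    | wtr j => rcases h with ⟨-,-,hk,rfl⟩|⟨-,-,rfl⟩|⟨-,-,rfl⟩ <;> exact hM
    | adt a => rcases h with ⟨-,-,rfl⟩|⟨-,-,rfl⟩ <;> exact hM
  case slrWrite p x e =>
    cases p with
    | rdr i => obtain ⟨-,-,-,rfl⟩ := hs; exact hM
    | wtr j => obtain ⟨-,-,-,rfl⟩ := hs; exact hM
    | adt a => exact hs.elim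
  case mRead p v =>
    obtain ⟨-, h⟩ := hs
    cases p with
    | rdr i => rcases h with ⟨-,rfl⟩|⟨-,rfl⟩ <;> exact hM
    | wtr j => obtain ⟨-,rfl⟩ := h; exact hM
    | adt a => obtain ⟨-,rfl⟩ := h; exact hM
  case mWrite p v =>
    cases p with
    | rdr i =>
      obtain ⟨h1, h2, h3, h4⟩ := hR i
      rcases hs with ⟨hpc, hv, rfl⟩ | ⟨hpc, -, hv, rfl⟩ <;> subst hv <;>
      · have hlsr : (c.rst i).mc.widx = (c.rst i).lsr := h4 (by rw [hpc]; trivial)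
        exact MOk_wmax hM (MOk_mArg _ _ _ _ (by omega)
          (fun jj => by have := h3 jj; omega))
    | wtr j =>
      obtain ⟨h1, h2, h3⟩ := hW j
      obtain ⟨hpc, hv, rfl⟩ := hs
      subst hv
      exact MOk_wmax hM (MOk_mArg _ _ _ _ h1 h2)
    | adt a => exact hs.elim
  case hRead j km a => obtain ⟨-,-,-,rfl⟩ := hs; exact hM
  case hWrite i x => obtain ⟨-,-,rfl⟩ := hs; exact hM
  case tau p =>
    cases p with
    | rdr i => rcases hs with ⟨-,-,rfl⟩|⟨-,rfl⟩ <;> exact hM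
    | wtr j => obtain ⟨-,-,rfl⟩ := hs; exact hM
    | adt a => exact hs.elim

lemma RLoc_step {c c' : Config m n} {l : Lbl m n} (hs : Step c l c')
    (hM : MInv c) (hR : ∀ i, RLoc c i) : ∀ i, RLoc c' i := by
  have hMm := M_mono hs
  intro i
  cases l <;> simp only [Step] at hs
  case invRead i₀ =>
    obtain ⟨hpc, rfl⟩ := hs
    by_cases hii : i = i₀
    · subst hii
      obtain ⟨h1, h2, h3, h4⟩ := hR i
      simp only [RLoc, upR, Function.update_self]
      refine ⟨h1, h2, h3, ?_⟩
      split <;> simp [G4set]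
    · exact RLoc_frame (by simp [upR, Function.update_of_ne hii]) hMm (hR i)
  case respRead i₀ v =>
    obtain ⟨hpc, -, rfl⟩ := hs
    by_cases hii : i = i₀
    · subst hii
      obtain ⟨h1, h2, h3, h4⟩ := hR i
      simp only [RLoc, upR, Function.update_self]
      exact ⟨h1, h2, h3, by simp [G4set]⟩
    · exact RLoc_frame (by simp [upR, Function.update_of_ne hii]) hMm (hR i)
  case invWrite j v => obtain ⟨-, rfl⟩ := hs; exact RLoc_frame rfl hMm (hR i)
  case respWrite j => obtain ⟨-, rfl⟩ := hs; exact RLoc_frame rfl hMm (hR i)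
  case invAudit a => obtain ⟨-, rfl⟩ := hs; exact RLoc_frame rfl hMm (hR i)
  case respAudit a A => obtain ⟨-, -, rfl⟩ := hs; exact RLoc_frame rfl hMm (hR i)
  case slrRead p x win =>
    obtain ⟨-, h⟩ := hs
    cases p with
    | rdr i₀ =>
      by_cases hii : i = i₀
      · subst hii
        obtain ⟨h1, h2, h3, h4⟩ := hR i
        rcases h with ⟨hpc,-,rfl⟩|⟨hpc,-,rfl⟩|⟨hpc,-,rfl⟩|⟨hpc,-,rfl⟩ <;>
          simp only [RLoc, upR, Function.update_self]
        · refine ⟨h1, h2, h3, ?_⟩; split <;> simp [G4set]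
        · exact ⟨h1, h2, h3, by simp [G4set]⟩
        · exact ⟨h1, h2, h3, fun _ => h4 (by rw [hpc]; trivial)⟩
        · exact ⟨h1, h2, h3, fun _ => h4 (by rw [hpc]; trivial)⟩
      · rcases h with ⟨-,-,rfl⟩|⟨-,-,rfl⟩|⟨-,-,rfl⟩|⟨-,-,rfl⟩ <;>
          exact RLoc_frame (by simp [upR, Function.update_of_ne hii]) hMm (hR i)
    | wtr j => rcases h with ⟨-,-,hk,rfl⟩|⟨-,-,rfl⟩|⟨-,-,rfl⟩ <;> exact RLoc_frame rfl hMm (hR i)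
    | adt a => rcases h with ⟨-,-,rfl⟩|⟨-,-,rfl⟩ <;> exact RLoc_frame rfl hMm (hR i)
  case slrWrite p x e =>
    cases p with
    | rdr i₀ =>
      obtain ⟨hpc, -, -, rfl⟩ := hs
      by_cases hii : i = i₀
      · subst hii
        obtain ⟨h1, h2, h3, h4⟩ := hR i
        simp only [RLoc, upR, Function.update_self]
        exact ⟨h1, h2, h3, fun _ => h4 (by rw [hpc]; trivial)⟩
      · exact RLoc_frame (by simp [upR, Function.update_of_ne hii]) hMm (hR i)
    | wtr j => obtain ⟨-,-,-,rfl⟩ := hs; exact RLoc_frame rfl hMm (hR i)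
    | adt a => exact hs.elim
  case mRead p v =>
    obtain ⟨hv, h⟩ := hs
    cases p with
    | rdr i₀ =>
      by_cases hii : i = i₀
      · subst hii
        obtain ⟨h1, h2, h3, h4⟩ := hR i
        rcases h with ⟨hpc, rfl⟩ | ⟨hpc, rfl⟩ <;> subst hv
        · simp only [RLoc, upR, Function.update_self]
          refine ⟨h1, hM.1, hM.2, ?_⟩
          split
          · next hguard => intro _; exact hguard
          · simp [G4set]
        · by_cases hcnd : (c.rst i).lsr < c.M.ridx i
          · simp only [RLoc, upR, Function.update_self, if_pos hcnd]
            exact ⟨hM.2 i, hM.1, hM.2, by simp [G4set]⟩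
          · simp only [RLoc, upR, Function.update_self, if_neg hcnd]
            exact ⟨le_refl _, hM.1, hM.2, fun _ => trivial⟩
      · rcases h with ⟨-, rfl⟩ | ⟨-, rfl⟩ <;>
          exact RLoc_frame (by simp [upR, Function.update_of_ne hii]) hMm (hR i)
    | wtr j => obtain ⟨-, rfl⟩ := h; exact RLoc_frame rfl hMm (hR i)
    | adt a => obtain ⟨-, rfl⟩ := h; exact RLoc_frame rfl hMm (hR i)
  case mWrite p v =>
    cases p with
    | rdr i₀ =>
      by_cases hii : i = i₀
      · subst hii
        obtain ⟨h1, h2, h3, h4⟩ := hR i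
        rcases hs with ⟨hpc, -, rfl⟩ | ⟨hpc, -, -, rfl⟩ <;>
          simp only [RLoc, upR, Function.update_self]
        · exact ⟨le_trans h1 hMm, h2, h3, by simp [G4set]⟩
        · exact ⟨le_trans h1 hMm, h2, h3,
            fun _ => h4 (by rw [hpc]; trivial)⟩
      · rcases hs with ⟨-, -, rfl⟩ | ⟨-, -, -, rfl⟩ <;>
          exact RLoc_frame (by simp [upR, Function.update_of_ne hii]) hMm (hR i)
    | wtr j =>
      obtain ⟨-, -, rfl⟩ := hs
      refine RLoc_frame ?_ hMm (hR i); rfl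
    | adt a => exact hs.elim
  case hRead j km a => obtain ⟨-,-,-,rfl⟩ := hs; exact RLoc_frame rfl hMm (hR i)
  case hWrite i₀ x =>
    obtain ⟨hpc, -, rfl⟩ := hs
    by_cases hii : i = i₀
    · subst hii
      obtain ⟨h1, h2, h3, h4⟩ := hR i
      simp only [RLoc, upR, Function.update_self]
      exact ⟨h1, h2, h3, fun _ => h4 (by rw [hpc]; trivial)⟩
    · exact RLoc_frame (by simp [upR, Function.update_of_ne hii]) hMm (hR i)
  case tau p =>
    cases p with
    | rdr i₀ =>
      by_cases hii : i = i₀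
      · subst hii
        obtain ⟨h1, h2, h3, h4⟩ := hR i
        rcases hs with ⟨hpc, -, rfl⟩ | ⟨hpc, rfl⟩ <;>
          simp only [RLoc, upR, Function.update_self]
        · exact ⟨h1, h2, h3, fun _ => h4 (by rw [hpc]; trivial)⟩
        · refine ⟨h1, h2, h3, ?_⟩
          split <;> simp [G4set]
      · rcases hs with ⟨-, -, rfl⟩ | ⟨-, rfl⟩ <;>
          exact RLoc_frame (by simp [upR, Function.update_of_ne hii]) hMm (hR i)
    | wtr j => obtain ⟨-, -, rfl⟩ := hs; exact RLoc_frame rfl hMm (hR i)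
    | adt a => exact hs.elim


lemma WLoc_step {c c' : Config m n} {l : Lbl m n} (hs : Step c l c')
    (hM : MInv c) (hW : ∀ j, WLoc c j) : ∀ j, WLoc c' j := by
  have hMm := M_mono hs
  intro j
  cases l <;> simp only [Step] at hs
  case invRead i => obtain ⟨-, rfl⟩ := hs; exact WLoc_frame rfl hMm (hW j)
  case respRead i v => obtain ⟨-, -, rfl⟩ := hs; exact WLoc_frame rfl hMm (hW j)
  case invWrite j₀ v =>
    obtain ⟨hpc, rfl⟩ := hs
    by_cases hjj : j = j₀
    · subst hjj
      obtain ⟨h1, h2, h3⟩ := hW j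
      simp only [WLoc, upW, Function.update_self]
      exact ⟨h1, h2, by simp⟩
    · exact WLoc_frame (by simp [upW, Function.update_of_ne hjj]) hMm (hW j)
  case respWrite j₀ =>
    obtain ⟨hpc, rfl⟩ := hs
    by_cases hjj : j = j₀
    · subst hjj
      obtain ⟨h1, h2, h3⟩ := hW j
      simp only [WLoc, upW, Function.update_self]
      exact ⟨h1, h2, by simp⟩
    · exact WLoc_frame (by simp [upW, Function.update_of_ne hjj]) hMm (hW j)
  case invAudit a => obtain ⟨-, rfl⟩ := hs; exact WLoc_frame rfl hMm (hW j)
  case respAudit a A => obtain ⟨-, -, rfl⟩ := hs; exact WLoc_frame rfl hMm (hW j)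
  case slrRead p x win =>
    obtain ⟨-, h⟩ := hs
    cases p with
    | rdr i => rcases h with ⟨-,-,rfl⟩|⟨-,-,rfl⟩|⟨-,-,rfl⟩|⟨-,-,rfl⟩ <;>
        exact WLoc_frame rfl hMm (hW j)
    | wtr j₀ =>
      by_cases hjj : j = j₀
      · subst hjj
        obtain ⟨h1, h2, h3⟩ := hW j
        rcases h with ⟨hpc,-,hk,rfl⟩|⟨hpc,-,rfl⟩|⟨hpc,-,rfl⟩ <;>
          simp only [WLoc, upW, Function.update_self] <;>
          exact ⟨h1, h2, by simp⟩
      · rcases h with ⟨-,-,hk,rfl⟩|⟨-,-,rfl⟩|⟨-,-,rfl⟩ <;>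
          exact WLoc_frame (by simp [upW, Function.update_of_ne hjj]) hMm (hW j)
    | adt a => rcases h with ⟨-,-,rfl⟩|⟨-,-,rfl⟩ <;> exact WLoc_frame rfl hMm (hW j)
  case slrWrite p x e =>
    cases p with
    | rdr i => obtain ⟨-,-,-,rfl⟩ := hs; refine WLoc_frame ?_ hMm (hW j); rfl
    | wtr j₀ =>
      obtain ⟨hpc, -, -, rfl⟩ := hs
      by_cases hjj : j = j₀
      · subst hjj
        obtain ⟨h1, h2, h3⟩ := hW j
        simp only [WLoc, upW, Function.update_self]
        exact ⟨h1, h2, by simp⟩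
      · refine WLoc_frame ?_ hMm (hW j); simp [upW, Function.update_of_ne hjj]
    | adt a => exact hs.elim
  case mRead p v =>
    obtain ⟨hv, h⟩ := hs
    cases p with
    | rdr i => rcases h with ⟨-, rfl⟩ | ⟨-, rfl⟩ <;> exact WLoc_frame rfl hMm (hW j)
    | wtr j₀ =>
      obtain ⟨hpc, rfl⟩ := h
      subst hv
      by_cases hjj : j = j₀
      · subst hjj
        simp only [WLoc, upW, Function.update_self]
        exact ⟨hM.1, hM.2, by simp⟩
      · exact WLoc_frame (by simp [upW, Function.update_of_ne hjj]) hMm (hW j)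
    | adt a => obtain ⟨-, rfl⟩ := h; exact WLoc_frame rfl hMm (hW j)
  case mWrite p v =>
    cases p with
    | rdr i =>
      rcases hs with ⟨-, -, rfl⟩ | ⟨-, -, -, rfl⟩ <;> (refine WLoc_frame ?_ hMm (hW j); rfl)
    | wtr j₀ =>
      obtain ⟨hpc, hv, rfl⟩ := hs
      by_cases hjj : j = j₀
      · subst hjj
        obtain ⟨h1, h2, h3⟩ := hW j
        simp only [WLoc, upW, Function.update_self]
        refine ⟨h1, h2, fun _ => ?_⟩
        subst hv
        have h5 := wmax_widx_le_right c.M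
          (mArg (c.wst j).mc (c.wst j).win (c.wst j).mc.widx (c.wst j).val)
        have h6 : (mArg (c.wst j).mc (c.wst j).win (c.wst j).mc.widx (c.wst j).val).widx
            = (c.wst j).mc.widx + 1 := rfl
        show (c.wst j).mc.widx <
          (wmax c.M (mArg (c.wst j).mc (c.wst j).win (c.wst j).mc.widx (c.wst j).val)).widx
        omega
      · refine WLoc_frame ?_ hMm (hW j); simp [upW, Function.update_of_ne hjj]
    | adt a => exact hs.elim
  case hRead j₀ km a =>
    obtain ⟨hpc, -, ha, rfl⟩ := hs
    subst ha
    by_cases hjj : j = j₀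
    · subst hjj
      obtain ⟨h1, h2, h3⟩ := hW j
      by_cases hcnd : (c.wst j).mc.ridx km < c.H km
      · simp only [WLoc, upW, Function.update_self, if_pos hcnd]
        exact ⟨h1, h2, by simp⟩
      · simp only [WLoc, upW, Function.update_self, if_neg hcnd]
        exact ⟨h1, h2, by simp [hpc]⟩
    · exact WLoc_frame (by simp [upW, Function.update_of_ne hjj]) hMm (hW j)
  case hWrite i x => obtain ⟨-,-,rfl⟩ := hs; refine WLoc_frame ?_ hMm (hW j); rfl
  case tau p =>
    cases p with
    | rdr i => rcases hs with ⟨-, -, rfl⟩ | ⟨-, rfl⟩ <;> exact WLoc_frame rfl hMm (hW j)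
    | wtr j₀ =>
      obtain ⟨hpc, -, rfl⟩ := hs
      by_cases hjj : j = j₀
      · subst hjj
        obtain ⟨h1, h2, h3⟩ := hW j
        simp only [WLoc, upW, Function.update_self]
        exact ⟨h1, h2, by simp⟩
      · exact WLoc_frame (by simp [upW, Function.update_of_ne hjj]) hMm (hW j)
    | adt a => exact hs.elim

lemma WW_step {c c' : Config m n} {l : Lbl m n} (hs : Step c l c')
    (hW : ∀ j, WLoc c j) (j : Fin n) (k : ℤ) (h : WW c j k) : WW c' j k := by
  have hMm := M_mono hs
  cases l <;> simp only [Step] at hs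
  case invRead i => obtain ⟨-, rfl⟩ := hs; exact WW_frame rfl hMm h
  case respRead i v => obtain ⟨-, -, rfl⟩ := hs; exact WW_frame rfl hMm h
  case invWrite j₀ v =>
    obtain ⟨hpc, rfl⟩ := hs
    by_cases hjj : j = j₀
    · subst hjj
      simp only [WW, hpc] at h
      simp only [WW, upW, Function.update_self]
      exact h
    · refine WW_frame ?_ hMm h; simp [upW, Function.update_of_ne hjj]
  case respWrite j₀ =>
    obtain ⟨hpc, rfl⟩ := hs
    by_cases hjj : j = j₀
    · subst hjj
      have h3 := (hW j).2.2 hpc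
      simp only [WW, hpc] at h
      simp only [WW, upW, Function.update_self]
      omega
    · refine WW_frame ?_ hMm h; simp [upW, Function.update_of_ne hjj]
  case invAudit a => obtain ⟨-, rfl⟩ := hs; exact WW_frame rfl hMm h
  case respAudit a A => obtain ⟨-, -, rfl⟩ := hs; exact WW_frame rfl hMm h
  case slrRead p x win =>
    obtain ⟨-, hh⟩ := hs
    cases p with
    | rdr i => rcases hh with ⟨-,-,rfl⟩|⟨-,-,rfl⟩|⟨-,-,rfl⟩|⟨-,-,rfl⟩ <;>
        exact WW_frame rfl hMm h
    | wtr j₀ =>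
      by_cases hjj : j = j₀
      · subst hjj
        rcases hh with ⟨hpc,-,hk,rfl⟩|⟨hpc,-,rfl⟩|⟨hpc,-,rfl⟩ <;>
        · simp only [WW, hpc] at h
          simp only [WW, upW, Function.update_self]
          exact h
      · rcases hh with ⟨-,-,hk,rfl⟩|⟨-,-,rfl⟩|⟨-,-,rfl⟩ <;>
          (refine WW_frame ?_ hMm h; simp [upW, Function.update_of_ne hjj])
    | adt a => rcases hh with ⟨-,-,rfl⟩|⟨-,-,rfl⟩ <;> exact WW_frame rfl hMm h
  case slrWrite p x e =>
    cases p with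
    | rdr i => obtain ⟨-,-,-,rfl⟩ := hs; refine WW_frame ?_ hMm h; rfl
    | wtr j₀ =>
      obtain ⟨hpc, -, -, rfl⟩ := hs
      by_cases hjj : j = j₀
      · subst hjj
        simp only [WW, hpc] at h
        simp only [WW, upW, Function.update_self]
        omega
      · refine WW_frame ?_ hMm h; simp [upW, Function.update_of_ne hjj]
    | adt a => exact hs.elim
  case mRead p v =>
    obtain ⟨hv, hh⟩ := hs
    cases p with
    | rdr i => rcases hh with ⟨-, rfl⟩ | ⟨-, rfl⟩ <;> exact WW_frame rfl hMm h
    | wtr j₀ =>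
      obtain ⟨hpc, rfl⟩ := hh
      subst hv
      by_cases hjj : j = j₀
      · subst hjj
        simp only [WW, hpc] at h
        simp only [WW, upW, Function.update_self]
        exact h
      · refine WW_frame ?_ hMm h; simp [upW, Function.update_of_ne hjj]
    | adt a => obtain ⟨-, rfl⟩ := hh; exact WW_frame rfl hMm h
  case mWrite p v =>
    cases p with
    | rdr i =>
      rcases hs with ⟨-, -, rfl⟩ | ⟨-, -, -, rfl⟩ <;> (refine WW_frame ?_ hMm h; rfl)
    | wtr j₀ =>
      obtain ⟨hpc, hv, rfl⟩ := hs
      by_cases hjj : j = j₀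
      · subst hjj
        simp only [WW, hpc] at h
        simp only [WW, upW, Function.update_self]
        exact h
      · refine WW_frame ?_ hMm h; simp [upW, Function.update_of_ne hjj]
    | adt a => exact hs.elim
  case hRead j₀ km a =>
    obtain ⟨hpc, -, ha, rfl⟩ := hs
    subst ha
    by_cases hjj : j = j₀
    · subst hjj
      simp only [WW, hpc] at h
      by_cases hcnd : (c.wst j).mc.ridx km < c.H km
      · simp only [WW, upW, Function.update_self, if_pos hcnd]
        exact h
      · simp only [WW, upW, Function.update_self, if_neg hcnd, hpc]
        exact h
    · refine WW_frame ?_ hMm h; simp [upW, Function.update_of_ne hjj]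
  case hWrite i x => obtain ⟨-,-,rfl⟩ := hs; refine WW_frame ?_ hMm h; rfl
  case tau p =>
    cases p with
    | rdr i => rcases hs with ⟨-, -, rfl⟩ | ⟨-, rfl⟩ <;> exact WW_frame rfl hMm h
    | wtr j₀ =>
      obtain ⟨hpc, -, rfl⟩ := hs
      by_cases hjj : j = j₀
      · subst hjj
        simp only [WW, hpc] at h
        simp only [WW, upW, Function.update_self]
        exact h
      · refine WW_frame ?_ hMm h; simp [upW, Function.update_of_ne hjj]
    | adt a => exact hs.elim


lemma RW_step {c c' : Config m n} {l : Lbl m n} (hs : Step c l c')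
    (hM : MInv c) (hR : ∀ i, RLoc c i)
    (hnd : ∀ (k : ℤ), ∀ e ∈ c.slr k, e ∈ c'.slr k)
    (i : Fin m) (k : ℤ) (hk : 0 ≤ k) (h : RW c i k) : RW c' i k := by
  have hMm := M_mono hs
  cases l <;> simp only [Step] at hs
  case invRead i₀ =>
    obtain ⟨hpc, rfl⟩ := hs
    by_cases hii : i = i₀
    · subst hii
      simp only [RW, hpc] at h
      by_cases hl0 : 0 ≤ (c.rst i).lsr
      · simp only [RW, upR, Function.update_self, if_pos hl0]
        exact h
      · simp only [RW, upR, Function.update_self, if_neg hl0]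
        rcases h with h | h
        · omega
        · exact h
    · refine RW_frame ?_ hMm (hnd k) h; simp [upR, Function.update_of_ne hii]
  case respRead i₀ v =>
    obtain ⟨hpc, -, rfl⟩ := hs
    by_cases hii : i = i₀
    · subst hii
      simp only [RW, hpc] at h
      simp only [RW, upR, Function.update_self]
      exact h
    · refine RW_frame ?_ hMm (hnd k) h; simp [upR, Function.update_of_ne hii]
  case invWrite j v => obtain ⟨-, rfl⟩ := hs; exact RW_frame rfl hMm (hnd k) h
  case respWrite j => obtain ⟨-, rfl⟩ := hs; exact RW_frame rfl hMm (hnd k) h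
  case invAudit a => obtain ⟨-, rfl⟩ := hs; exact RW_frame rfl hMm (hnd k) h
  case respAudit a A => obtain ⟨-, -, rfl⟩ := hs; exact RW_frame rfl hMm (hnd k) h
  case slrRead p x win =>
    obtain ⟨hwin, hh⟩ := hs
    cases p with
    | rdr i₀ =>
      by_cases hii : i = i₀
      · subst hii
        rcases hh with ⟨hpc, hx, rfl⟩ | ⟨hpc, hx, rfl⟩ | ⟨hpc, hx, rfl⟩ | ⟨hpc, hx, rfl⟩
        · simp only [RW, hpc] at h
          by_cases hw : hasW win
          · simp only [RW, upR, Function.update_self, if_pos hw]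
            exact h
          · simp only [RW, upR, Function.update_self, if_neg hw]
            exact h
        · simp only [RW, hpc] at h
          simp only [RW, upR, Function.update_self]
          exact h
        · simp only [RW, hpc] at h
          simp only [RW, upR, Function.update_self]
          rcases h with h | ⟨h1, h2⟩
          · exact Or.inl h
          · refine Or.inr (Or.inr ⟨h1, ?_⟩)
            rw [hwin, hx, ← h1]
            exact h2
        · simp only [RW, hpc] at h
          simp only [RW, upR, Function.update_self]
          exact h
      · rcases hh with ⟨-,-,rfl⟩|⟨-,-,rfl⟩|⟨-,-,rfl⟩|⟨-,-,rfl⟩ <;>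
          (refine RW_frame ?_ hMm (hnd k) h; simp [upR, Function.update_of_ne hii])
    | wtr j => rcases hh with ⟨-,-,hk',rfl⟩|⟨-,-,rfl⟩|⟨-,-,rfl⟩ <;>
        exact RW_frame rfl hMm (hnd k) h
    | adt a => rcases hh with ⟨-,-,rfl⟩|⟨-,-,rfl⟩ <;> exact RW_frame rfl hMm (hnd k) h
  case slrWrite p x e =>
    cases p with
    | rdr i₀ =>
      obtain ⟨hpc, hx, he, rfl⟩ := hs
      by_cases hii : i = i₀
      · subst hii
        simp only [RW, hpc] at h
        simp only [RW, upR, Function.update_self]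
        exact Or.inl h
      · refine RW_frame ?_ hMm (hnd k) h; simp [upR, Function.update_of_ne hii]
    | wtr j =>
      obtain ⟨-, -, -, rfl⟩ := hs
      refine RW_frame ?_ hMm (hnd k) h; rfl
    | adt a => exact hs.elim
  case mRead p v =>
    obtain ⟨hv, hh⟩ := hs
    cases p with
    | rdr i₀ =>
      subst hv
      by_cases hii : i = i₀
      · subst hii
        rcases hh with ⟨hpc, rfl⟩ | ⟨hpc, rfl⟩
        · simp only [RW, hpc] at h
          by_cases hveq : c.M.widx = (c.rst i).lsr
          · simp only [RW, upR, Function.update_self, if_pos hveq]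
            exact h
          · simp only [RW, upR, Function.update_self, if_neg hveq]
            rcases h with h | h
            · have h1 := (hR i).1
              omega
            · exact h
        · simp only [RW, hpc] at h
          by_cases hcnd : (c.rst i).lsr < c.M.ridx i
          · simp only [RW, upR, Function.update_self, if_pos hcnd]
            exact Or.inr h
          · simp only [RW, upR, Function.update_self, if_neg hcnd]
            exact h
      · rcases hh with ⟨-, rfl⟩ | ⟨-, rfl⟩ <;>
          (refine RW_frame ?_ hMm (hnd k) h; simp [upR, Function.update_of_ne hii])
    | wtr j => obtain ⟨-, rfl⟩ := hh; exact RW_frame rfl hMm (hnd k) h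
    | adt a => obtain ⟨-, rfl⟩ := hh; exact RW_frame rfl hMm (hnd k) h
  case mWrite p v =>
    cases p with
    | rdr i₀ =>
      by_cases hii : i = i₀
      · subst hii
        rcases hs with ⟨hpc, hv, rfl⟩ | ⟨hpc, hhw, hv, rfl⟩
        · subst hv
          simp only [RW, hpc] at h
          simp only [RW, upR, Function.update_self]
          have h5 := wmax_widx_le_right c.M
            (mArg (c.rst i).mc (c.rst i).win (c.rst i).lsr (c.rst i).lval)
          have h6 : (mArg (c.rst i).mc (c.rst i).win (c.rst i).lsr (c.rst i).lval).widx
              = (c.rst i).lsr + 1 := rfl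
          have h7 := wmax_widx_le_left c.M
            (mArg (c.rst i).mc (c.rst i).win (c.rst i).lsr (c.rst i).lval)
          rcases h with h | h <;> omega
        · subst hv
          simp only [RW, hpc] at h
          simp only [RW, upR, Function.update_self]
          have h5 := wmax_widx_le_right c.M
            (mArg (c.rst i).mc (c.rst i).win (c.rst i).lsr (c.rst i).lval)
          have h6 : (mArg (c.rst i).mc (c.rst i).win (c.rst i).lsr (c.rst i).lval).widx
              = (c.rst i).lsr + 1 := rfl
          have h7 := wmax_widx_le_left c.M
            (mArg (c.rst i).mc (c.rst i).win (c.rst i).lsr (c.rst i).lval)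
          rcases h with h | h | ⟨h1, h2⟩
          · exact Or.inl h
          · exact Or.inr (Or.inl (by omega))
          · exact Or.inr (Or.inl (by omega))
      · rcases hs with ⟨-, -, rfl⟩ | ⟨-, -, -, rfl⟩ <;>
          (refine RW_frame ?_ hMm (hnd k) h; simp [upR, Function.update_of_ne hii])
    | wtr j =>
      obtain ⟨-, -, rfl⟩ := hs
      refine RW_frame ?_ hMm (hnd k) h; rfl
    | adt a => exact hs.elim
  case hRead j₀ km a =>
    obtain ⟨-, -, -, rfl⟩ := hs
    exact RW_frame rfl hMm (hnd k) h
  case hWrite i₀ x =>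
    obtain ⟨hpc, -, rfl⟩ := hs
    by_cases hii : i = i₀
    · subst hii
      simp only [RW, hpc] at h
      simp only [RW, upR, Function.update_self]
      exact h
    · refine RW_frame ?_ hMm (hnd k) h; simp [upR, Function.update_of_ne hii]
  case tau p =>
    cases p with
    | rdr i₀ =>
      by_cases hii : i = i₀
      · subst hii
        rcases hs with ⟨hpc, hhw, rfl⟩ | ⟨hpc, rfl⟩
        · simp only [RW, hpc] at h
          simp only [RW, upR, Function.update_self]
          rcases h with h | h | ⟨h1, h2⟩
          · exact Or.inl h
          · exact Or.inr (Or.inl h)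
          · exact Or.inr (Or.inr ⟨h1, h2, hhw⟩)
        · simp only [RW, hpc] at h
          by_cases hmem : i ∈ readersOf (c.rst i).win
          · simp only [RW, upR, Function.update_self, if_pos hmem]
            rcases h with h | h | ⟨h1, -⟩
            · exact Or.inl (le_of_lt h)
            · exact Or.inr h
            · exact Or.inl (le_of_eq h1)
          · simp only [RW, upR, Function.update_self, if_neg hmem]
            rcases h with h | h | ⟨h1, h2, h3⟩
            · have h4 := (hR i).1
              omega
            · exact h
            · exact absurd (Finset.mem_union_left _ (mem_preW_of_noW h3 h2)) hmem
      · rcases hs with ⟨-, -, rfl⟩ | ⟨-, rfl⟩ <;>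
          (refine RW_frame ?_ hMm (hnd k) h; simp [upR, Function.update_of_ne hii])
    | wtr j => obtain ⟨-, -, rfl⟩ := hs; exact RW_frame rfl hMm (hnd k) h
    | adt a => exact hs.elim


/-- Would-be writer invariant, indexed by the process. -/
def PW (c : Config m n) : Proc m n → ℤ → Prop
  | .rdr i, k => RW c i k
  | .wtr j, k => WW c j k
  | .adt _, _ => True

lemma write_shape {c c' : Config m n} {l : Lbl m n} (hs : Step c l c')
    (hR : ∀ i, RLoc c i) (hW : ∀ j, WLoc c j) :
    (c'.slr = c.slr ∧ ∀ k : ℤ, stepw k l = none) ∨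
    ∃ p x e, l = .slrWrite p x e ∧ 0 ≤ x ∧ IsReal p ∧ ¬ PW c p x ∧
      c'.slr = Function.update c.slr x (slide (m + n) (c.slr x) e) := by
  cases l <;> simp only [Step] at hs
  case invRead i => obtain ⟨-, rfl⟩ := hs; exact Or.inl ⟨rfl, fun _ => rfl⟩
  case respRead i v => obtain ⟨-, -, rfl⟩ := hs; exact Or.inl ⟨rfl, fun _ => rfl⟩
  case invWrite j v => obtain ⟨-, rfl⟩ := hs; exact Or.inl ⟨rfl, fun _ => rfl⟩
  case respWrite j => obtain ⟨-, rfl⟩ := hs; exact Or.inl ⟨rfl, fun _ => rfl⟩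
  case invAudit a => obtain ⟨-, rfl⟩ := hs; exact Or.inl ⟨rfl, fun _ => rfl⟩
  case respAudit a A => obtain ⟨-, -, rfl⟩ := hs; exact Or.inl ⟨rfl, fun _ => rfl⟩
  case slrRead p x win =>
    obtain ⟨-, hh⟩ := hs
    cases p with
    | rdr i => rcases hh with ⟨-,-,rfl⟩|⟨-,-,rfl⟩|⟨-,-,rfl⟩|⟨-,-,rfl⟩ <;>
        exact Or.inl ⟨rfl, fun _ => rfl⟩
    | wtr j => rcases hh with ⟨-,-,hk,rfl⟩|⟨-,-,rfl⟩|⟨-,-,rfl⟩ <;>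
        exact Or.inl ⟨rfl, fun _ => rfl⟩
    | adt a => rcases hh with ⟨-,-,rfl⟩|⟨-,-,rfl⟩ <;> exact Or.inl ⟨rfl, fun _ => rfl⟩
  case slrWrite p x e =>
    cases p with
    | rdr i =>
      obtain ⟨hpc, hx, he, rfl⟩ := hs
      obtain ⟨h1, h2, h3, h4⟩ := hR i
      have h5 : (c.rst i).mc.widx = (c.rst i).lsr := h4 (by rw [hpc]; trivial)
      refine Or.inr ⟨_, _, _, rfl, by omega, trivial, ?_, rfl⟩
      simp only [PW, RW, hpc]
      omega
    | wtr j =>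
      obtain ⟨hpc, hx, he, rfl⟩ := hs
      obtain ⟨h1, h2, h3⟩ := hW j
      refine Or.inr ⟨_, _, _, rfl, by omega, trivial, ?_, rfl⟩
      simp only [PW, WW, hpc]
      omega
    | adt a => exact hs.elim
  case mRead p v =>
    obtain ⟨-, hh⟩ := hs
    cases p with
    | rdr i => rcases hh with ⟨-, rfl⟩ | ⟨-, rfl⟩ <;> exact Or.inl ⟨rfl, fun _ => rfl⟩
    | wtr j => obtain ⟨-, rfl⟩ := hh; exact Or.inl ⟨rfl, fun _ => rfl⟩
    | adt a => obtain ⟨-, rfl⟩ := hh; exact Or.inl ⟨rfl, fun _ => rfl⟩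
  case mWrite p v =>
    cases p with
    | rdr i => rcases hs with ⟨-, -, rfl⟩ | ⟨-, -, -, rfl⟩ <;>
        exact Or.inl ⟨rfl, fun _ => rfl⟩
    | wtr j => obtain ⟨-, -, rfl⟩ := hs; exact Or.inl ⟨rfl, fun _ => rfl⟩
    | adt a => exact hs.elim
  case hRead j km a => obtain ⟨-,-,-,rfl⟩ := hs; exact Or.inl ⟨rfl, fun _ => rfl⟩
  case hWrite i x => obtain ⟨-,-,rfl⟩ := hs; exact Or.inl ⟨rfl, fun _ => rfl⟩
  case tau p =>
    cases p with
    | rdr i => rcases hs with ⟨-, -, rfl⟩ | ⟨-, rfl⟩ <;> exact Or.inl ⟨rfl, fun _ => rfl⟩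
    | wtr j => obtain ⟨-, -, rfl⟩ := hs; exact Or.inl ⟨rfl, fun _ => rfl⟩
    | adt a => exact hs.elim

lemma procs_zero (E : Exec m n v0 j0) (k : ℤ) : procs E k 0 = [] := rfl

lemma inv_zero (E : Exec m n v0 j0) : Inv E 0 := by
  refine ⟨?_, ?_, ?_, ?_, ?_, ?_⟩
  · rw [E.h0]
    exact ⟨by norm_num [init], fun i => by norm_num [init]⟩
  · intro i
    rw [E.h0]
    exact ⟨by norm_num [init], by norm_num [init], fun j => by norm_num [init],
      by simp [init, G4set]⟩
  · intro j
    rw [E.h0]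
    exact ⟨by norm_num [init], fun i => by norm_num [init], by simp [init]⟩
  · intro k hk
    rw [E.h0]
    refine ⟨List.nodup_nil, by simp [procs_zero], ?_⟩
    have : k ≠ -1 := by omega
    simp [procs_zero, init, this]
  · intro i k hk hm
    simp [procs_zero] at hm
  · intro j k hk hm
    simp [procs_zero] at hm

lemma inv_step (E : Exec m n v0 j0) (t : ℕ) (ht : t < E.len) (h : Inv E t) :
    Inv E (t + 1) := by
  obtain ⟨hM, hR, hW, hL, hRW, hWW⟩ := h
  have hs := E.hstep t ht
  have hMm := M_mono hs
  have hM' := MInv_step hs hM hR hW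
  have hR' := RLoc_step hs hM hR
  have hW' := WLoc_step hs hM hW
  rcases write_shape hs hR hW with ⟨hse, hsw⟩ | ⟨p, x, e, hl, hx0, hreal, hnp, hse⟩
  · have hp : ∀ k : ℤ, procs E k (t + 1) = procs E k t := by
      intro k; rw [procs_succ, hsw k]; simp
    have hnd : ∀ (k : ℤ), ∀ e ∈ (E.cfg t).slr k, e ∈ (E.cfg (t + 1)).slr k := by
      intro k e he; rw [hse]; exact he
    refine ⟨hM', hR', hW', ?_, ?_, ?_⟩
    · intro k hk; rw [hp, hse]; exact hL k hk
    · intro i k hk hm; rw [hp] at hm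
      exact RW_step hs hM hR hnd i k hk (hRW i k hk hm)
    · intro j k hk hm; rw [hp] at hm
      exact WW_step hs hW j k (hWW j k hk hm)
  · have hnotmem : p ∉ procs E x t := by
      intro hmem
      cases p with
      | rdr i => exact hnp (hRW i x hx0 hmem)
      | wtr j => exact hnp (hWW j x hx0 hmem)
      | adt a => exact hreal
    obtain ⟨hnodup, hrl, hlen⟩ := hL x hx0
    have hcard : (procs E x t).length + 1 ≤ m + n := by
      have := real_nodup_length_le (p :: procs E x t)
        (List.nodup_cons.mpr ⟨hnotmem, hnodup⟩)
        (by
          intro q hq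
          rcases List.mem_cons.mp hq with rfl | hq
          · exact hreal
          · exact hrl q hq)
      simpa using this
    have hslrlen : ((E.cfg t).slr x).length < m + n := by omega
    have happ : (E.cfg (t + 1)).slr x = (E.cfg t).slr x ++ [e] := by
      rw [hse, Function.update_self, slide_eq_append hslrlen]
    have hnd : ∀ (k : ℤ), ∀ e' ∈ (E.cfg t).slr k, e' ∈ (E.cfg (t + 1)).slr k := by
      intro k e' he'
      by_cases hkx : k = x
      · subst hkx; rw [happ]; exact List.mem_append_left _ he'
      · rw [hse, Function.update_of_ne hkx]; exact he'
    have hp : ∀ k : ℤ,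
        procs E k (t + 1) = if k = x then procs E k t ++ [p] else procs E k t := by
      intro k
      rw [procs_succ, hl]
      by_cases hkx : k = x
      · subst hkx; simp [stepw]
      · simp [stepw, Ne.symm hkx, hkx]
    refine ⟨hM', hR', hW', ?_, ?_, ?_⟩
    · intro k hk
      rw [hp]
      by_cases hkx : k = x
      · subst hkx
        rw [if_pos rfl, happ]
        refine ⟨?_, ?_, ?_⟩
        · simp [List.nodup_append, hnodup, hnotmem]
          exact fun a ha hap => hnotmem (hap ▸ ha)
        · intro q hq
          rcases List.mem_append.mp hq with hq | hq
          · exact hrl q hq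
          · rw [List.mem_singleton.mp hq]; exact hreal
        · simp only [List.length_append, List.length_singleton]
          omega
      · rw [if_neg hkx, hse, Function.update_of_ne hkx]; exact hL k hk
    · intro i k hk hm
      rw [hp] at hm
      by_cases hkx : k = x
      · subst hkx
        rw [if_pos rfl] at hm
        rcases List.mem_append.mp hm with hm | hm
        · exact RW_step hs hM hR hnd i k hk (hRW i k hk hm)
        · have hpe : Proc.rdr i = p := List.mem_singleton.mp hm
          subst hpe
          rw [hl] at hs
          simp only [Step] at hs
          obtain ⟨hpc, hx, he, hc'⟩ := hs
          rw [hc']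
          simp only [RW, upR, Function.update_self, Function.update_self]
          refine Or.inr ⟨hx, ?_⟩
          subst he
          have hpos : 0 < m + n := by omega
          exact self_mem_slide hpos _ _
      · rw [if_neg hkx] at hm
        exact RW_step hs hM hR hnd i k hk (hRW i k hk hm)
    · intro j k hk hm
      rw [hp] at hm
      by_cases hkx : k = x
      · subst hkx
        rw [if_pos rfl] at hm
        rcases List.mem_append.mp hm with hm | hm
        · exact WW_step hs hW j k (hWW j k hk hm)
        · have hpe : Proc.wtr j = p := List.mem_singleton.mp hm
          subst hpe
          rw [hl] at hs
          simp only [Step] at hs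
          obtain ⟨hpc, hx, he, hc'⟩ := hs
          rw [hc']
          simp only [WW, upW, Function.update_self]
          omega
      · rw [if_neg hkx] at hm
        exact WW_step hs hW j k (hWW j k hk hm)

lemma inv_all (E : Exec m n v0 j0) : ∀ t, t ≤ E.len → Inv E t := by
  intro t
  induction t with
  | zero => intro _; exact inv_zero E
  | succ t ih => intro h; exact inv_step E t (by omega) (ih (by omega))

lemma no_two (E : Exec m n v0 j0) {p : Proc m n} {k : ℤ} (hk : 0 ≤ k)
    {t₁ t₂ : ℕ} (h12 : t₁ < t₂) (h2 : t₂ < E.len) {e₁ e₂ : Entry m n}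
    (hl₁ : E.lbl t₁ = .slrWrite p k e₁) (hl₂ : E.lbl t₂ = .slrWrite p k e₂) : False := by
  obtain ⟨hM, hR, hW, hL, hRW, hWW⟩ := inv_all E t₂ (le_of_lt h2)
  have hmem : p ∈ procs E k t₂ := by
    refine List.mem_filterMap.mpr ⟨t₁, ?_, ?_⟩
    · exact List.mem_range.mpr h12
    · simp [stepw, hl₁]
  have hs := E.hstep t₂ h2
  rw [hl₂] at hs
  simp only [Step] at hs
  cases p with
  | rdr i =>
    obtain ⟨hpc, hx, -, -⟩ := hs
    have hrw := hRW i k hk hmem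
    simp only [RW, hpc] at hrw
    omega
  | wtr j =>
    obtain ⟨hpc, hx, -, -⟩ := hs
    have hww := hWW j k hk hmem
    simp only [WW, hpc] at hww
    omega
  | adt a => exact hs

end WriteOnce

/-- Lemma `write_once`.  In any execution of Algorithm 1,
each process applies at most one low-level write primitive to the sliding
register `SLR[k]`, for every index `k ≥ 0`. -/
theorem write_once (m n : ℕ) (v0 : Val) (j0 : Fin n) (E : Exec m n v0 j0)
    (p : Proc m n) (k : ℤ) (hk : 0 ≤ k) (t₁ t₂ : ℕ)
    (h₁ : t₁ < E.len) (h₂ : t₂ < E.len) (e₁ e₂ : Entry m n)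
    (hl₁ : E.lbl t₁ = .slrWrite p k e₁) (hl₂ : E.lbl t₂ = .slrWrite p k e₂) :
    t₁ = t₂ := by
  rcases lt_trichotomy t₁ t₂ with h | h | h
  · exact absurd (no_two E hk h h₂ hl₁ hl₂) not_false
  · exact h
  · exact absurd (no_two E hk h h₁ hl₂ hl₁) not_false

end Alg1
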